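/- arXiv:2104.14268 — 3 statements merged into one kernel-verified Lean document; each statement's English description precedes it below -/
import Mathlib

section
/- Let P be a nonempty finite type and s : P → P → ℝ a function with strictly positive values. Then s satisfies the cyclic symmetry condition (for all p, q, r ∈ P, s(p,q)·s(q,r)·s(r,p) = s(p,r)·s(r,q)·s(q,p)) if and only if there exists a function δ : P → ℝ with δ(p) > 0 for all p such that δ(p)·s(p,q) = δ(q)·s(q,p) for all p, q ∈ P (i.e., the rescaled function s'(p,q) := δ(p)·s(p,q) is symmetric). -/
/-- A strictly positive similarity function on a nonempty finite type of problems
satisfies the cyclic symmetry condition iff it can be rescaled problem-by-problem,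
via positive weights δ, into a symmetric function. -/
theorem cyclic_symmetry_iff_symmetrizable
    {P : Type*} [Fintype P] [Nonempty P] (s : P → P → ℝ)
    (hs : ∀ p q, 0 < s p q) :
    (∀ p q r : P, s p q * s q r * s r p = s p r * s r q * s q p) ↔
      (∃ δ : P → ℝ, (∀ p, 0 < δ p) ∧ ∀ p q : P, δ p * s p q = δ q * s q p) := by
  constructor
  · intro hcyc
    obtain ⟨o⟩ := ‹Nonempty P›
    refine ⟨fun p => s o p / s p o, fun p => div_pos (hs o p) (hs p o), fun p q => ?_⟩
    have h := hcyc o p q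
    have hpo := (hs p o).ne'
    have hqo := (hs q o).ne'
    field_simp
    nlinarith [hs o p, hs o q, hs p o, hs q o, hs p q, hs q p]
  · rintro ⟨δ, hδ, hsym⟩ p q r
    have h1 := hsym p q
    have h2 := hsym q r
    have h3 := hsym r p
    have key : δ p * δ q * δ r * (s p q * s q r * s r p)
        = δ p * δ q * δ r * (s p r * s r q * s q p) := by
      calc δ p * δ q * δ r * (s p q * s q r * s r p)
          = (δ p * s p q) * (δ q * s q r) * (δ r * s r p) := by ring
        _ = (δ q * s q p) * (δ r * s r q) * (δ p * s p r) := by rw [h1, h2, h3]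
        _ = δ p * δ q * δ r * (s p r * s r q * s q p) := by ring
    have hpos : 0 < δ p * δ q * δ r := mul_pos (mul_pos (hδ p) (hδ q)) (hδ r)
    exact mul_left_cancel₀ hpos.ne' key
end

section
/- Let P be a nonempty finite type, let s : P → P → ℝ have strictly positive values, and suppose s satisfies the cyclic symmetry condition (for all p, q, r ∈ P, s(p,q)·s(q,r)·s(r,p) = s(p,r)·s(r,q)·s(q,p)). Fix any p₀ ∈ P and define δ : P → ℝ by δ(p) = s(p₀,p) / s(p,p₀). Then δ(p) > 0 for all p, and the function s'(p,q) := δ(p)·s(p,q) is symmetric: s'(p,q) = s'(q,p) for all p, q ∈ P. -/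
/-- Explicit construction of symmetrizing weights: under cyclic symmetry, the
weights δ(p) = s(p₀,p)/s(p,p₀) are positive and δ(p)·s(p,q) is symmetric. -/
theorem explicit_symmetrizing_weights
    {P : Type*} [Fintype P] [Nonempty P] (s : P → P → ℝ)
    (hs : ∀ p q, 0 < s p q)
    (hcyc : ∀ p q r : P, s p q * s q r * s r p = s p r * s r q * s q p)
    (p₀ : P) (δ : P → ℝ) (hδ : ∀ p, δ p = s p₀ p / s p p₀) :
    (∀ p, 0 < δ p) ∧ ∀ p q : P, δ p * s p q = δ q * s q p := by
  refine ⟨fun p => by rw [hδ]; exact div_pos (hs _ _) (hs _ _), fun p q => ?_⟩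
  rw [hδ, hδ]
  have h := hcyc p₀ p q
  have h1 := (hs p p₀).ne'
  have h2 := (hs q p₀).ne'
  field_simp
  nlinarith [hs p₀ p, hs p₀ q, hs p q, hs q p]
end

section
/- Let P be a nonempty finite type and s : P → P → ℝ have strictly positive values. Suppose δ : P → ℝ and δ' : P → ℝ both have strictly positive values and both symmetrize s, i.e., δ(p)·s(p,q) = δ(q)·s(q,p) and δ'(p)·s(p,q) = δ'(q)·s(q,p) for all p, q ∈ P. Then there exists a constant c > 0 such that δ'(p) = c·δ(p) for all p ∈ P; consequently the symmetric function p,q ↦ δ'(p)·s(p,q) equals c times the symmetric function p,q ↦ δ(p)·s(p,q). -/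
/-- Uniqueness of symmetrizing weights up to a positive constant: any two systems
of positive weights symmetrizing s differ by a positive multiplicative constant,
hence the resulting symmetric similarity functions are proportional. -/
theorem symmetrizing_weights_unique_up_to_constant
    {P : Type*} [Fintype P] [Nonempty P] (s : P → P → ℝ)
    (hs : ∀ p q, 0 < s p q) (δ δ' : P → ℝ)
    (hδ : ∀ p, 0 < δ p) (hδ' : ∀ p, 0 < δ' p)
    (h1 : ∀ p q : P, δ p * s p q = δ q * s q p)
    (h2 : ∀ p q : P, δ' p * s p q = δ' q * s q p) :
    ∃ c : ℝ, 0 < c ∧ (∀ p, δ' p = c * δ p) ∧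
      ∀ p q : P, δ' p * s p q = c * (δ p * s p q) := by
  obtain ⟨p₀⟩ := ‹Nonempty P›
  have key : ∀ p, δ' p * δ p₀ = δ' p₀ * δ p := by
    intro p
    have e1 := h1 p₀ p
    have e2 := h2 p₀ p
    have hsp' := (hs p₀ p).ne'
    apply mul_right_cancel₀ hsp'
    linear_combination δ' p * e1 - δ p * e2
  have heq : ∀ p, δ' p = δ' p₀ / δ p₀ * δ p := by
    intro p
    have h0 := (hδ p₀).ne'
    field_simp
    linear_combination key p
  exact ⟨δ' p₀ / δ p₀, div_pos (hδ' p₀) (hδ p₀), heq,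
    fun p q => by rw [heq p]; ring⟩
end
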